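/- Existence criterion for nondegenerate spherical tetrahedra. Let l_{ab} ∈ [0,π] for 1 ≤ a < b ≤ 4. There exist linearly independent unit vectors u₁,…,u₄ ∈ ℝ⁴ with arccos⟨u_a,u_b⟩ = l_{ab} for all a < b if and only if: (i) each of the four faces (a,b,c) satisfies the spherical triangle conditions, namely the triangle inequalities among l_{ab}, l_{ac}, l_{bc} and l_{ab} + l_{ac} + l_{bc} ≤ 2π, and (ii) the determinant of the 4×4 Gram matrix (cos l_{ab}) (with ones on the diagonal) is strictly positive. -/

import Mathlib

/-!
The Gram matrix `G = (cos l_{ab})` of unit vectors `u_a` is positive definite exactly when the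
`u_a` are linearly independent, and every positive definite matrix is such a Gram matrix.
So the theorem says that `G` is positive definite iff its four `3 × 3` principal minors are
nonnegative and `det G > 0`. One direction is the nonnegativity of principal minors. For the
other, `det (G + t • 1)` is a polynomial in `t` whose coefficients are sums of principal minors
(the `2 × 2` ones being `sin² l_{ab}`), hence positive for `t > 0`, so `G` has no negative
eigenvalue.

For a face, the `3 × 3` minor factors as `(cos (b - c) - cos a) * (cos a - cos (b + c))`, and on
`[0, π]` the two factors are nonnegative exactly when `|b - c| ≤ a` and
`a ≤ min (b + c) (2π - b - c)`, which together are the spherical triangle conditions.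
-/

open Real
open scoped RealInnerProductSpace

/-- Spherical triangle conditions for a triple of lengths: the triangle inequalities
together with perimeter at most `2π`. -/
def SphericalTriangleCond (a b c : ℝ) : Prop :=
  a ≤ b + c ∧ b ≤ a + c ∧ c ≤ a + b ∧ a + b + c ≤ 2 * π

open Matrix
open scoped ComplexOrder

theorem Matrix.IsHermitian.posSemidef_of_det_add_smul_one_ne_zero {𝕜 n : Type*}
    [RCLike 𝕜] [Fintype n] [DecidableEq n] {M : Matrix n n 𝕜} (hM : M.IsHermitian)
    (h : ∀ t : ℝ, 0 < t → (M + t • (1 : Matrix n n 𝕜)).det ≠ 0) : M.PosSemidef := by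
  refine hM.posSemidef_iff_eigenvalues_nonneg.2 fun i => not_lt.1 fun hneg => ?_
  refine h _ (neg_pos.2 hneg) (exists_mulVec_eq_zero_iff.1 ⟨hM.eigenvectorBasis i, ?_, ?_⟩)
  · exact fun h0 => hM.eigenvectorBasis.orthonormal.ne_zero i (by ext k; exact congrFun h0 k)
  · rw [add_mulVec, hM.mulVec_eigenvectorBasis, smul_mulVec, one_mulVec]
    module

open scoped MatrixOrder in
theorem exists_gram_eq_of_posSemidef {𝕜 n : Type*} [RCLike 𝕜] [Fintype n] {M : Matrix n n 𝕜}
    (hM : M.PosSemidef) : ∃ v : n → EuclideanSpace 𝕜 n, gram 𝕜 v = M := by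
  classical
  obtain ⟨B, rfl⟩ := CStarAlgebra.nonneg_iff_eq_star_mul_self.mp hM.nonneg
  refine ⟨fun j => WithLp.toLp 2 fun i => B i j, ?_⟩
  rw [gram_eq_conjTranspose_mul (EuclideanSpace.basisFun n 𝕜)]
  simp only [EuclideanSpace.basisFun_repr, star_eq_conjTranspose]
  rfl

theorem real_inner_eq_cos_of_arccos_eq {E : Type*} [SeminormedAddCommGroup E]
    [InnerProductSpace ℝ E] {x y : E} (hx : ‖x‖ = 1) (hy : ‖y‖ = 1) {l : ℝ}
    (h : arccos ⟪x, y⟫ = l) : ⟪x, y⟫ = cos l := by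
  have hxy := abs_real_inner_le_norm x y
  rw [hx, hy, one_mul] at hxy
  rw [← h, cos_arccos (abs_le.1 hxy).1 (abs_le.1 hxy).2]

theorem mul_nonneg_iff_of_add_nonneg {R : Type*} [CommRing R] [LinearOrder R]
    [IsStrictOrderedRing R] {x y : R} (h : 0 ≤ x + y) : 0 ≤ x * y ↔ 0 ≤ x ∧ 0 ≤ y :=
  ⟨fun hxy => ⟨by nlinarith, by nlinarith⟩, fun ⟨hx, hy⟩ => mul_nonneg hx hy⟩

def unitGram3 (c12 c13 c23 : ℝ) : Matrix (Fin 3) (Fin 3) ℝ :=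
  !![1, c12, c13; c12, 1, c23; c13, c23, 1]

theorem det_unitGram3 (c12 c13 c23 : ℝ) :
    (unitGram3 c12 c13 c23).det = 1 - c12 ^ 2 - c13 ^ 2 - c23 ^ 2 + 2 * (c12 * c13 * c23) := by
  simp [unitGram3, det_fin_three]
  ring

section SphericalTriangle

variable {a b c : ℝ}

theorem abs_sub_le_iff_cos_le_cos_sub (ha : a ∈ Set.Icc 0 π) (hb : b ∈ Set.Icc 0 π)
    (hc : c ∈ Set.Icc 0 π) : |b - c| ≤ a ↔ cos a ≤ cos (b - c) := by
  have hbc : |b - c| ∈ Set.Icc 0 π :=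
    ⟨abs_nonneg _, abs_le.2 ⟨by linarith [hb.1, hc.2], by linarith [hb.2, hc.1]⟩⟩
  rw [← cos_abs (b - c), strictAntiOn_cos.le_iff_ge ha hbc]

theorem le_and_le_two_pi_sub_iff_cos_le_cos {s : ℝ} (ha : a ∈ Set.Icc 0 π)
    (hs : s ∈ Set.Icc 0 (2 * π)) : a ≤ s ∧ a ≤ 2 * π - s ↔ cos s ≤ cos a := by
  obtain ⟨ha0, haπ⟩ := ha
  rcases le_total s π with hsπ | hπs
  · rw [strictAntiOn_cos.le_iff_ge ⟨hs.1, hsπ⟩ ⟨ha0, haπ⟩]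
    exact ⟨And.left, fun h => ⟨h, by linarith⟩⟩
  · rw [← cos_two_pi_sub s,
      strictAntiOn_cos.le_iff_ge ⟨by linarith [hs.2], by linarith⟩ ⟨ha0, haπ⟩]
    exact ⟨And.right, fun h => ⟨by linarith, h⟩⟩

theorem one_sub_cos_sq_add_eq_mul (a b c : ℝ) :
    1 - cos a ^ 2 - cos b ^ 2 - cos c ^ 2 + 2 * (cos a * cos b * cos c)
      = (cos (b - c) - cos a) * (cos a - cos (b + c)) := by
  rw [cos_sub, cos_add]
  nlinarith [sin_sq_add_cos_sq b, sin_sq_add_cos_sq c]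

theorem sphericalTriangleCond_iff (ha : a ∈ Set.Icc 0 π) (hb : b ∈ Set.Icc 0 π)
    (hc : c ∈ Set.Icc 0 π) :
    SphericalTriangleCond a b c ↔ 0 ≤ (unitGram3 (cos a) (cos b) (cos c)).det := by
  -- the two factors sum to `2 sin b sin c ≥ 0`, so they cannot both be negative
  have hsum : 0 ≤ (cos (b - c) - cos a) + (cos a - cos (b + c)) := by
    rw [cos_sub, cos_add]
    nlinarith [sin_nonneg_of_nonneg_of_le_pi hb.1 hb.2, sin_nonneg_of_nonneg_of_le_pi hc.1 hc.2]
  rw [det_unitGram3, one_sub_cos_sq_add_eq_mul, mul_nonneg_iff_of_add_nonneg hsum, sub_nonneg,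
    sub_nonneg, ← abs_sub_le_iff_cos_le_cos_sub ha hb hc,
    ← le_and_le_two_pi_sub_iff_cos_le_cos ha ⟨by linarith [hb.1, hc.1], by linarith [hb.2, hc.2]⟩,
    abs_sub_le_iff, SphericalTriangleCond]
  constructor
  · rintro ⟨h1, h2, h3, h4⟩
    exact ⟨⟨by linarith, by linarith⟩, h1, by linarith⟩
  · rintro ⟨⟨h1, h2⟩, h3, h4⟩
    exact ⟨h3, by linarith, by linarith, by linarith⟩

end SphericalTriangle

def unitGram4 (c12 c13 c14 c23 c24 c34 : ℝ) : Matrix (Fin 4) (Fin 4) ℝ :=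
  !![1, c12, c13, c14; c12, 1, c23, c24; c13, c23, 1, c34; c14, c24, c34, 1]

section UnitGram

variable (c12 c13 c14 c23 c24 c34 : ℝ)

theorem isHermitian_unitGram4 : (unitGram4 c12 c13 c14 c23 c24 c34).IsHermitian := by
  ext i j
  fin_cases i <;> fin_cases j <;> rfl

theorem det_unitGram4_add_smul_one (t : ℝ) :
    (unitGram4 c12 c13 c14 c23 c24 c34 + t • 1).det
      = t ^ 4 + 4 * t ^ 3
        + ((1 - c12 ^ 2) + (1 - c13 ^ 2) + (1 - c14 ^ 2) + (1 - c23 ^ 2) + (1 - c24 ^ 2)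
            + (1 - c34 ^ 2)) * t ^ 2
        + ((unitGram3 c12 c13 c23).det + (unitGram3 c12 c14 c24).det
            + (unitGram3 c13 c14 c34).det + (unitGram3 c23 c24 c34).det) * t
        + (unitGram4 c12 c13 c14 c23 c24 c34).det := by
  simp only [det_unitGram3]
  simp [unitGram4, det_succ_row_zero, Fin.sum_univ_succ, Fin.succAbove, one_apply]
  ring

theorem det_unitGram3_nonneg_of_posSemidef
    (h : (unitGram4 c12 c13 c14 c23 c24 c34).PosSemidef) :
    0 ≤ (unitGram3 c12 c13 c23).det ∧ 0 ≤ (unitGram3 c12 c14 c24).det ∧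
      0 ≤ (unitGram3 c13 c14 c34).det ∧ 0 ≤ (unitGram3 c23 c24 c34).det := by
  have face (i j k : Fin 4) {a b c : ℝ}
      (hface : (unitGram4 c12 c13 c14 c23 c24 c34).submatrix ![i, j, k] ![i, j, k]
        = unitGram3 a b c) : 0 ≤ (unitGram3 a b c).det :=
    hface ▸ (h.submatrix _).det_nonneg
  refine ⟨face 0 1 2 ?_, face 0 1 3 ?_, face 0 2 3 ?_, face 1 2 3 ?_⟩ <;>
    ext i j <;> fin_cases i <;> fin_cases j <;> rfl

theorem posDef_unitGram4 (hc : ∀ i j, |unitGram4 c12 c13 c14 c23 c24 c34 i j| ≤ 1)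
    (h₁ : 0 ≤ (unitGram3 c12 c13 c23).det) (h₂ : 0 ≤ (unitGram3 c12 c14 c24).det)
    (h₃ : 0 ≤ (unitGram3 c13 c14 c34).det) (h₄ : 0 ≤ (unitGram3 c23 c24 c34).det)
    (hdet : 0 < (unitGram4 c12 c13 c14 c23 c24 c34).det) :
    (unitGram4 c12 c13 c14 c23 c24 c34).PosDef := by
  have hsq (i j : Fin 4) : 0 ≤ 1 - unitGram4 c12 c13 c14 c23 c24 c34 i j ^ 2 :=
    sub_nonneg.2 ((sq_le_one_iff_abs_le_one _).2 (hc i j))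
  have h₀ : 0 ≤ (1 - c12 ^ 2) + (1 - c13 ^ 2) + (1 - c14 ^ 2) + (1 - c23 ^ 2)
      + (1 - c24 ^ 2) + (1 - c34 ^ 2) := by
    have := hsq 0 1; have := hsq 0 2; have := hsq 0 3
    have := hsq 1 2; have := hsq 1 3; have := hsq 2 3
    simp only [unitGram4] at *
    positivity
  have hpos (t : ℝ) (ht : 0 < t) : 0 < (unitGram4 c12 c13 c14 c23 c24 c34 + t • 1).det := by
    rw [det_unitGram4_add_smul_one]
    positivity
  have hpsd : (unitGram4 c12 c13 c14 c23 c24 c34).PosSemidef :=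
    (isHermitian_unitGram4 ..).posSemidef_of_det_add_smul_one_ne_zero fun t ht => (hpos t ht).ne'
  exact hpsd.posDef_iff_det_ne_zero.2 hdet.ne'

theorem gram_eq_unitGram4_iff {E : Type*} [SeminormedAddCommGroup E] [InnerProductSpace ℝ E]
    (u : Fin 4 → E) :
    gram ℝ u = unitGram4 c12 c13 c14 c23 c24 c34 ↔
      (∀ i, ‖u i‖ = 1) ∧ ⟪u 0, u 1⟫ = c12 ∧ ⟪u 0, u 2⟫ = c13 ∧ ⟪u 0, u 3⟫ = c14 ∧
        ⟪u 1, u 2⟫ = c23 ∧ ⟪u 1, u 3⟫ = c24 ∧ ⟪u 2, u 3⟫ = c34 := by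
  have hnorm (x : E) : ‖x‖ = 1 ↔ ⟪x, x⟫ = 1 := by
    rw [real_inner_self_eq_norm_sq, pow_eq_one_iff_of_nonneg (norm_nonneg x) two_ne_zero]
  simp only [hnorm]
  constructor
  · intro h
    have e (i j : Fin 4) : ⟪u i, u j⟫ = unitGram4 c12 c13 c14 c23 c24 c34 i j := by
      rw [← h]
      rfl
    exact ⟨fun i => by rw [e]; fin_cases i <;> rfl, e 0 1, e 0 2, e 0 3, e 1 2, e 1 3, e 2 3⟩
  · rintro ⟨hn, rfl, rfl, rfl, rfl, rfl, rfl⟩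
    ext i j
    fin_cases i <;> fin_cases j <;> first | exact hn _ | rfl | exact real_inner_comm _ _

end UnitGram

theorem spherical_tetrahedron_exists_iff (l12 l13 l14 l23 l24 l34 : ℝ)
    (h12 : l12 ∈ Set.Icc 0 π) (h13 : l13 ∈ Set.Icc 0 π) (h14 : l14 ∈ Set.Icc 0 π)
    (h23 : l23 ∈ Set.Icc 0 π) (h24 : l24 ∈ Set.Icc 0 π) (h34 : l34 ∈ Set.Icc 0 π) :
    (∃ u : Fin 4 → EuclideanSpace ℝ (Fin 4),
      LinearIndependent ℝ u ∧ (∀ i, ‖u i‖ = 1) ∧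
      Real.arccos ⟪u 0, u 1⟫ = l12 ∧ Real.arccos ⟪u 0, u 2⟫ = l13 ∧
      Real.arccos ⟪u 0, u 3⟫ = l14 ∧ Real.arccos ⟪u 1, u 2⟫ = l23 ∧
      Real.arccos ⟪u 1, u 3⟫ = l24 ∧ Real.arccos ⟪u 2, u 3⟫ = l34) ↔
    (SphericalTriangleCond l12 l13 l23 ∧ SphericalTriangleCond l12 l14 l24 ∧
     SphericalTriangleCond l13 l14 l34 ∧ SphericalTriangleCond l23 l24 l34 ∧
     0 < Matrix.det !![1, Real.cos l12, Real.cos l13, Real.cos l14;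
                       Real.cos l12, 1, Real.cos l23, Real.cos l24;
                       Real.cos l13, Real.cos l23, 1, Real.cos l34;
                       Real.cos l14, Real.cos l24, Real.cos l34, 1]) := by
  set G := unitGram4 (cos l12) (cos l13) (cos l14) (cos l23) (cos l24) (cos l34)
  change _ ↔ _ ∧ _ ∧ _ ∧ _ ∧ 0 < G.det
  simp only [sphericalTriangleCond_iff h12 h13 h23, sphericalTriangleCond_iff h12 h14 h24,
    sphericalTriangleCond_iff h13 h14 h34, sphericalTriangleCond_iff h23 h24 h34]
  constructor
  · rintro ⟨u, hu, hnorm, e12, e13, e14, e23, e24, e34⟩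
    have hG : gram ℝ u = G := (gram_eq_unitGram4_iff _ _ _ _ _ _ u).2
      ⟨hnorm, real_inner_eq_cos_of_arccos_eq (hnorm 0) (hnorm 1) e12,
        real_inner_eq_cos_of_arccos_eq (hnorm 0) (hnorm 2) e13,
        real_inner_eq_cos_of_arccos_eq (hnorm 0) (hnorm 3) e14,
        real_inner_eq_cos_of_arccos_eq (hnorm 1) (hnorm 2) e23,
        real_inner_eq_cos_of_arccos_eq (hnorm 1) (hnorm 3) e24,
        real_inner_eq_cos_of_arccos_eq (hnorm 2) (hnorm 3) e34⟩
    have hPD : G.PosDef := hG ▸ posDef_gram_of_linearIndependent hu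
    obtain ⟨f₁, f₂, f₃, f₄⟩ := det_unitGram3_nonneg_of_posSemidef _ _ _ _ _ _ hPD.posSemidef
    exact ⟨f₁, f₂, f₃, f₄, hPD.det_pos⟩
  · rintro ⟨f₁, f₂, f₃, f₄, hdet⟩
    have hPD : G.PosDef := posDef_unitGram4 _ _ _ _ _ _
      (fun i j => by fin_cases i <;> fin_cases j <;> simp [unitGram4, abs_cos_le_one])
      f₁ f₂ f₃ f₄ hdet
    obtain ⟨u, hu⟩ := exists_gram_eq_of_posSemidef hPD.posSemidef
    obtain ⟨hnorm, e12, e13, e14, e23, e24, e34⟩ := (gram_eq_unitGram4_iff _ _ _ _ _ _ u).1 hu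
    refine ⟨u, linearIndependent_of_posDef_gram (hu ▸ hPD), hnorm, ?_, ?_, ?_, ?_, ?_, ?_⟩
    · rw [e12, arccos_cos h12.1 h12.2]
    · rw [e13, arccos_cos h13.1 h13.2]
    · rw [e14, arccos_cos h14.1 h14.2]
    · rw [e23, arccos_cos h23.1 h23.2]
    · rw [e24, arccos_cos h24.1 h24.2]
    · rw [e34, arccos_cos h34.1 h34.2]
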